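/- arXiv:2201.08963 — 2 statements merged into one kernel-verified Lean document; each statement's English description precedes it below -/
import Mathlib

section
/- In the category Cau of causal-nets, a morphism is a monomorphism if and only if it is an inclusion. -/
open CategoryTheory

namespace CausalNets

/-- Acyclicity condition for raw directed-multigraph data: every directed cycle
has length zero. -/
def NoCycleData (V E : Type) (s t : E → V) : Prop :=
  letI : Quiver V := ⟨fun a b => { e : E // s e = a ∧ t e = b }⟩
  ∀ (v : V) (p : Quiver.Path v v), p.length = 0

/-- A causal-net: a finite acyclic directed multigraph (isolated vertices and
parallel edges allowed). -/
structure CausalNet where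
  V : Type
  E : Type
  src : E → V
  tgt : E → V
  fintypeV : Fintype V
  fintypeE : Fintype E
  acyclic : NoCycleData V E src tgt

attribute [instance] CausalNet.fintypeV CausalNet.fintypeE

instance CausalNet.quiver (G : CausalNet) : Quiver G.V :=
  ⟨fun a b => { e : G.E // G.src e = a ∧ G.tgt e = b }⟩

/-- The category `Cau` of causal-nets: a morphism `G ⟶ H` is a functor between
the path categories `Paths G.V ⥤ Paths H.V`. -/
instance : Category CausalNet where
  Hom G H := Paths G.V ⥤ Paths H.V
  id G := 𝟭 (Paths G.V)
  comp φ ψ := φ ⋙ ψ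

variable {G H K : CausalNet}

/-- The action of a morphism of causal-nets on vertices (objects). -/
def vmap (φ : G ⟶ H) : G.V → H.V := (φ : Paths G.V ⥤ Paths H.V).obj

/-- The action of a morphism of causal-nets on directed paths (morphisms). -/
def pmap (φ : G ⟶ H) {a b : G.V} (p : Quiver.Path a b) :
    Quiver.Path (vmap φ a) (vmap φ b) :=
  (φ : Paths G.V ⥤ Paths H.V).map p

/-- The quiver arrow corresponding to an edge. -/
def edgeHom (G : CausalNet) (e : G.E) : G.src e ⟶ G.tgt e := ⟨e, rfl, rfl⟩

/-- The directed path which is the image of the edge `e` under the morphism `φ`. -/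
def edgePath (φ : G ⟶ H) (e : G.E) :
    Quiver.Path (vmap φ (G.src e)) (vmap φ (G.tgt e)) :=
  pmap φ (Quiver.Hom.toPath (edgeHom G e))

/-- The underlying edge of a quiver arrow. -/
def homEdge {a b : G.V} (f : a ⟶ b) : G.E := Subtype.val f

/-- The list of edges traversed by a directed path. -/
def pathEdges : {a b : G.V} → Quiver.Path a b → List G.E
  | _, _, Quiver.Path.nil => []
  | _, _, Quiver.Path.cons p f => pathEdges p ++ [homEdge f]

/-- The list of vertices visited by a directed path (including endpoints). -/
def pathVertices : {a b : G.V} → Quiver.Path a b → List G.V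
  | a, _, Quiver.Path.nil => [a]
  | _, b, Quiver.Path.cons p _ => pathVertices p ++ [b]

/-- An edge `e` is a contraction of `φ` if `φ(e)` has length `0`. -/
def IsContractionEdge (φ : G ⟶ H) (e : G.E) : Prop := (edgePath φ e).length = 0

/-- An edge `e` is a segment of `φ` if `φ(e)` has length `1`. -/
def IsSegmentEdge (φ : G ⟶ H) (e : G.E) : Prop := (edgePath φ e).length = 1

/-- An edge `e` is a subdivision of `φ` if `φ(e)` has length at least `2`. -/
def IsSubdivisionEdge (φ : G ⟶ H) (e : G.E) : Prop := 2 ≤ (edgePath φ e).length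

/-- `φ` maps the edge `e` to the length-one path consisting of the edge `h`. -/
def MapsToEdge (φ : G ⟶ H) (e : G.E) (h : H.E) : Prop :=
  pathEdges (edgePath φ e) = [h]

/-- A quotient: a morphism with no null-vertex and no null-edge. -/
def IsQuotientMor (φ : G ⟶ H) : Prop :=
  (∀ v : H.V, ∃ w : G.V, vmap φ w = v) ∧ ∀ h : H.E, ∃ e : G.E, MapsToEdge φ e h

/-- A coarse-graining: a quotient with no subdivision. -/
def IsCoarseGraining (φ : G ⟶ H) : Prop :=
  IsQuotientMor φ ∧ ∀ e : G.E, ¬ IsSubdivisionEdge φ e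

/-- A vertex-coarse-graining: a coarse-graining with no multiple-edge. -/
def IsVertexCoarseGraining (φ : G ⟶ H) : Prop :=
  IsCoarseGraining φ ∧
  ∀ (h : H.E) (e₁ e₂ : G.E), MapsToEdge φ e₁ h → MapsToEdge φ e₂ h → e₁ = e₂

/-- An edge-coarse-graining: a coarse-graining with no multiple-vertex and no
contraction. -/
def IsEdgeCoarseGraining (φ : G ⟶ H) : Prop :=
  IsCoarseGraining φ ∧ Function.Injective (vmap φ) ∧ ∀ e : G.E, ¬ IsContractionEdge φ e

/-- A merging: a vertex-coarse-graining with no contraction. -/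
def IsMerging (φ : G ⟶ H) : Prop :=
  IsVertexCoarseGraining φ ∧ ∀ e : G.E, ¬ IsContractionEdge φ e

/-- A fusion: a coarse-graining with no contraction. -/
def IsFusion (φ : G ⟶ H) : Prop :=
  IsCoarseGraining φ ∧ ∀ e : G.E, ¬ IsContractionEdge φ e

/-- An inclusion: a morphism injective on vertices and on directed paths
(an injective-on-objects faithful functor). -/
def IsInclusion (φ : G ⟶ H) : Prop :=
  Function.Injective (vmap φ) ∧
  ∀ (a b : G.V) (p q : Quiver.Path a b), pmap φ p = pmap φ q → p = q

/-- An embedding: an inclusion with no subdivision. -/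
def IsEmbedding (φ : G ⟶ H) : Prop :=
  IsInclusion φ ∧ ∀ e : G.E, ¬ IsSubdivisionEdge φ e

/-- An immersion: an inclusion such that images of distinct subdivision edges
share no edge. -/
def IsImmersion (φ : G ⟶ H) : Prop :=
  IsInclusion φ ∧
  ∀ e₁ e₂ : G.E, e₁ ≠ e₂ → IsSubdivisionEdge φ e₁ → IsSubdivisionEdge φ e₂ →
    ∀ h : H.E, h ∈ pathEdges (edgePath φ e₁) → h ∉ pathEdges (edgePath φ e₂)

/-- The internal vertices of a directed path (all visited vertices except the
two endpoints). -/
def internalVertices {a b : G.V} (p : Quiver.Path a b) : List G.V :=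
  ((pathVertices p).dropLast).tail

/-- A strong morphism: all internal vertices of images of subdivision edges are
null-vertices. -/
def IsStrong (φ : G ⟶ H) : Prop :=
  ∀ e : G.E, IsSubdivisionEdge φ e →
    ∀ v ∈ internalVertices (edgePath φ e), ∀ w : G.V, vmap φ w ≠ v

/-- A vertex-disjoint morphism: images of distinct subdivision edges share no
internal vertex. -/
def IsVertexDisjoint (φ : G ⟶ H) : Prop :=
  ∀ e₁ e₂ : G.E, e₁ ≠ e₂ → IsSubdivisionEdge φ e₁ → IsSubdivisionEdge φ e₂ →
    ∀ v : H.V, v ∈ internalVertices (edgePath φ e₁) → v ∉ internalVertices (edgePath φ e₂)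

/-- A topological embedding: a strong vertex-disjoint inclusion. -/
def IsTopologicalEmbedding (φ : G ⟶ H) : Prop :=
  IsInclusion φ ∧ IsStrong φ ∧ IsVertexDisjoint φ

/-- The edge `e` covers the vertex `v` if `v` occurs on the path `φ(e)`. -/
def Covers (φ : G ⟶ H) (e : G.E) (v : H.V) : Prop :=
  v ∈ pathVertices (edgePath φ e)

/-- An isolated vertex: a vertex incident to no edge. -/
def IsolatedVertex (G : CausalNet) (v : G.V) : Prop :=
  ∀ e : G.E, G.src e ≠ v ∧ G.tgt e ≠ v

/-- A subdivision morphism: a topological embedding such that every non-isolated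
vertex of the codomain is covered and every isolated vertex of the codomain is a
simple-vertex. -/
def IsSubdivisionMor (φ : G ⟶ H) : Prop :=
  IsTopologicalEmbedding φ ∧
  (∀ v : H.V, ¬ IsolatedVertex H v → ∃ e : G.E, Covers φ e v) ∧
  (∀ v : H.V, IsolatedVertex H v → ∃! w : G.V, vmap φ w = v)

theorem mapPath_length {V W : Type} [Quiver V] [Quiver W] (F : V ⥤q W) :
    ∀ {a b : V} (p : Quiver.Path a b), (F.mapPath p).length = p.length := by
  intro a b p
  induction p with
  | nil => rfl
  | cons q f ih =>
      show ((F.mapPath q).cons (F.map f)).length = (q.cons f).length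
      rw [Quiver.Path.length_cons, Quiver.Path.length_cons, ih]

theorem noCycleData_of_map {V₁ E₁ : Type} (s₁ t₁ : E₁ → V₁) (G : CausalNet)
    (f : V₁ → G.V) (g : E₁ → G.E)
    (hs : ∀ e, G.src (g e) = f (s₁ e)) (ht : ∀ e, G.tgt (g e) = f (t₁ e)) :
    NoCycleData V₁ E₁ s₁ t₁ := by
  letI : Quiver V₁ := ⟨fun a b => { e : E₁ // s₁ e = a ∧ t₁ e = b }⟩
  intro v p
  let F : V₁ ⥤q G.V :=
    { obj := f
      map := fun {a b} e =>
        ⟨g (Subtype.val e), by rw [hs, (Subtype.prop e).1], by rw [ht, (Subtype.prop e).2]⟩ }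
  have h := G.acyclic (f v) (F.mapPath p)
  rw [mapPath_length] at h
  exact h

theorem noCycleData_of_lt {V E : Type} [Preorder V] (s t : E → V)
    (hlt : ∀ e, s e < t e) : NoCycleData V E s t := by
  letI : Quiver V := ⟨fun a b => { e : E // s e = a ∧ t e = b }⟩
  have key : ∀ {a b : V} (p : Quiver.Path a b), (a = b ∧ p.length = 0) ∨ a < b := by
    intro a b p
    induction p with
    | nil => exact Or.inl ⟨rfl, rfl⟩
    | cons q f ih =>
        have hcb := hlt (Subtype.val f)
        rw [(Subtype.prop f).1, (Subtype.prop f).2] at hcb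
        rcases ih with ⟨h, _⟩ | h
        · exact Or.inr (by rw [h]; exact hcb)
        · exact Or.inr (lt_trans h hcb)
  intro v p
  rcases key p with ⟨_, h⟩ | h
  · exact h
  · exact absurd h (lt_irrefl v)

/-- The sub-causal-net spanned by a set of vertices and a set of edges. -/
noncomputable def mkSub (G : CausalNet) (Vs : Set G.V) (Es : Set G.E)
    (hs : ∀ e ∈ Es, G.src e ∈ Vs) (ht : ∀ e ∈ Es, G.tgt e ∈ Vs) : CausalNet where
  V := Vs
  E := Es
  src e := ⟨G.src e.1, hs e.1 e.2⟩
  tgt e := ⟨G.tgt e.1, ht e.1 e.2⟩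
  fintypeV := Fintype.ofFinite _
  fintypeE := Fintype.ofFinite _
  acyclic := noCycleData_of_map _ _ G Subtype.val Subtype.val (fun _ => rfl) (fun _ => rfl)

/-- The fiber of a morphism at a vertex `v` of the codomain: the sub-causal-net
of the domain on the vertices mapped to `v` and the edges mapped to the identity
path at `v`. -/
noncomputable def fiber (φ : G ⟶ H) (v : H.V) : CausalNet :=
  mkSub G {w : G.V | vmap φ w = v}
    {e : G.E | IsContractionEdge φ e ∧ vmap φ (G.src e) = v}
    (fun _ he => he.2)
    (fun e he =>
      show vmap φ (G.tgt e) = v from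
        Quiver.Path.eq_of_length_zero (edgePath φ e) he.1 ▸ he.2)

/-- The underlying undirected (simple) graph of a causal-net. -/
def undirected (G : CausalNet) : SimpleGraph G.V where
  Adj v w := v ≠ w ∧ ∃ e : G.E, (G.src e = v ∧ G.tgt e = w) ∨ (G.src e = w ∧ G.tgt e = v)
  symm := by
    constructor
    rintro v w ⟨hne, e, he⟩
    exact ⟨hne.symm, e, he.symm⟩
  loopless := by
    constructor
    intro v h
    exact h.1 rfl

/-- A causal-net is connected if its underlying undirected graph is connected. -/
def Connected (G : CausalNet) : Prop := (undirected G).Connected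

/-- A causal-Tree: a causal-net whose simplification has a tree as underlying
undirected graph.  (Since a causal-net is acyclic, the underlying undirected
graph of its simplification is exactly `undirected G`.) -/
def IsCausalTree (G : CausalNet) : Prop := (undirected G).IsTree

/-- A contraction: a vertex-coarse-graining all of whose fibers are connected. -/
def IsContractionMor (φ : G ⟶ H) : Prop :=
  IsVertexCoarseGraining φ ∧ ∀ v : H.V, Connected (fiber φ v)

/-- A simple contraction: a contraction with exactly one non-trivial fiber, that
fiber consisting of two vertices together with all edges from the first to the
second. -/
def IsSimpleContraction (φ : G ⟶ H) : Prop :=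
  IsContractionMor φ ∧
  ∃ w₁ w₂ : G.V, w₁ ≠ w₂ ∧ vmap φ w₁ = vmap φ w₂ ∧
    (∃ e : G.E, G.src e = w₁ ∧ G.tgt e = w₂) ∧
    (∀ e : G.E, IsContractionEdge φ e ↔ (G.src e = w₁ ∧ G.tgt e = w₂)) ∧
    (∀ u u' : G.V, vmap φ u = vmap φ u' →
      u = u' ∨ ((u = w₁ ∨ u = w₂) ∧ (u' = w₁ ∨ u' = w₂)))

/-- A tree-contraction: a contraction all of whose fibers are causal-Trees. -/
def IsTreeContraction (φ : G ⟶ H) : Prop :=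
  IsContractionMor φ ∧ ∀ v : H.V, IsCausalTree (fiber φ v)

/-- A directed multi-path: a causal-net whose simplification is a directed path. -/
def IsDirectedMultiPath (K : CausalNet) : Prop :=
  ∃ (a b : K.V) (p : Quiver.Path a b),
    (pathVertices p).Nodup ∧ (∀ v : K.V, v ∈ pathVertices p) ∧
    ∀ e : K.E, ∃ h ∈ pathEdges p, K.src e = K.src h ∧ K.tgt e = K.tgt h

/-- A path-contraction: a vertex-coarse-graining all of whose fibers are
directed multi-paths. -/
def IsPathContraction (φ : G ⟶ H) : Prop :=
  IsVertexCoarseGraining φ ∧ ∀ v : H.V, IsDirectedMultiPath (fiber φ v)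

/-- A point: a causal-net with exactly one vertex and no edges. -/
def IsPoint (A : CausalNet) : Prop := (∃ v : A.V, ∀ w : A.V, w = v) ∧ IsEmpty A.E

/-- Reachability: there is a directed path from `a` to `b`. -/
def Reaches (G : CausalNet) (a b : G.V) : Prop := Nonempty (Quiver.Path a b)

/-- A coclique: a set of vertices no two distinct members of which are
comparable under the reachability order. -/
def IsCoclique (G : CausalNet) (S : Set G.V) : Prop :=
  ∀ a ∈ S, ∀ b ∈ S, a ≠ b → ¬ Reaches G a b

/-- A multi-edge: the nonempty set of all edges from one fixed vertex to another. -/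
def IsMultiEdge (G : CausalNet) (s : Set G.E) : Prop :=
  s.Nonempty ∧ ∃ a b : G.V, s = {e : G.E | G.src e = a ∧ G.tgt e = b}

/-- The pair of vertices whose multi-edge is contracted by a simple contraction. -/
def ContractedPair (φ : G ⟶ H) (w₁ w₂ : G.V) : Prop :=
  w₁ ≠ w₂ ∧ vmap φ w₁ = vmap φ w₂ ∧ (∃ e : G.E, G.src e = w₁ ∧ G.tgt e = w₂) ∧
  ∀ e : G.E, IsContractionEdge φ e ↔ (G.src e = w₁ ∧ G.tgt e = w₂)

/-- Two causal-nets are isomorphic in `Cau`. -/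
def IsIsomorphicTo (A B : CausalNet) : Prop := ∃ φ : A ⟶ B, IsIso φ

/-- A simple causal-net: at most one edge between any ordered pair of vertices. -/
def IsSimpleNet (G : CausalNet) : Prop :=
  ∀ e₁ e₂ : G.E, G.src e₁ = G.src e₂ → G.tgt e₁ = G.tgt e₂ → e₁ = e₂

/-- A harmonic causal-net: every fusion out of it is an isomorphism. -/
def Harmonic (G : CausalNet) : Prop :=
  ∀ (H : CausalNet) (φ : G ⟶ H), IsFusion φ → IsIso φ

/-- A hamiltonian path: a directed path visiting every vertex exactly once. -/
def HasHamiltonianPath (G : CausalNet) : Prop :=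
  ∃ (a b : G.V) (p : Quiver.Path a b),
    (pathVertices p).Nodup ∧ ∀ v : G.V, v ∈ pathVertices p

/-- Morphisms which can be written as a composition of finitely many morphisms
each satisfying `P`. -/
inductive IsCompOf (P : ∀ ⦃A B : CausalNet⦄, (A ⟶ B) → Prop) :
    ∀ {A B : CausalNet}, (A ⟶ B) → Prop
  | of {A B : CausalNet} (φ : A ⟶ B) : P φ → IsCompOf P φ
  | comp {A B C : CausalNet} (φ : A ⟶ B) (ψ : B ⟶ C) :
      IsCompOf P φ → IsCompOf P ψ → IsCompOf P (φ ≫ ψ)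

/-
The point and the single-edge net corepresent the vertices and the directed paths of a
causal-net: morphisms out of them are exactly vertices, resp. paths, of the target, and
composing with `φ` acts on them by `vmap φ`, resp. `pmap φ`. Left-cancelling `φ` on these
probes makes a monomorphism injective on vertices and paths. Conversely, an
injective-on-objects faithful functor is left-cancellable in any category of categories.
-/

theorem _root_.CategoryTheory.Functor.eq_of_comp_eq_of_faithful {C D E : Type*} [Category C]
    [Category D] [Category E] {F₁ F₂ : C ⥤ D} (Φ : D ⥤ E) [Φ.Faithful]
    (hΦ : Function.Injective Φ.obj) (h : F₁ ⋙ Φ = F₂ ⋙ Φ) : F₁ = F₂ :=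
  CategoryTheory.Functor.ext (fun X => hΦ (Functor.congr_obj h X)) fun X Y f =>
    Φ.map_injective <| by simpa [eqToHom_map] using Functor.congr_hom h f

def pointNet : CausalNet where
  V := Unit
  E := Empty
  src := Empty.elim
  tgt := Empty.elim
  fintypeV := inferInstance
  fintypeE := inferInstance
  acyclic := noCycleData_of_lt _ _ Empty.rec

def pointMor (G : CausalNet) (a : G.V) : pointNet ⟶ G :=
  Paths.lift { obj := fun _ => a, map := fun f => f.1.elim }

theorem pointMor_injective (G : CausalNet) : Function.Injective (pointMor G) :=
  fun _ _ h => Functor.congr_obj h ()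

theorem pointMor_comp (φ : G ⟶ H) (a : G.V) : pointMor G a ≫ φ = pointMor H (vmap φ a) :=
  Paths.ext_functor rfl fun _ _ e => e.1.elim

def lineNet : CausalNet where
  V := Bool
  E := Unit
  src _ := false
  tgt _ := true
  fintypeV := inferInstance
  fintypeE := inferInstance
  acyclic := noCycleData_of_lt _ _ fun _ => Bool.false_lt_true

def lineMor (G : CausalNet) {a b : G.V} (p : Quiver.Path a b) : lineNet ⟶ G :=
  Paths.lift
    { obj := fun x => bif x then b else a
      map := fun f => p.cast (congrArg (cond · b a) f.2.1) (congrArg (cond · b a) f.2.2) }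

theorem lineMor_map_edge (G : CausalNet) {a b : G.V} (p : Quiver.Path a b) :
    pmap (lineMor G p) (edgeHom lineNet ()).toPath = p :=
  (Paths.lift_toPath _ _).trans rfl

theorem lineMor_injective (G : CausalNet) (a b : G.V) :
    Function.Injective (lineMor G : Quiver.Path a b → (lineNet ⟶ G)) := by
  intro p q h
  exact eq_of_heq <| (heq_of_eq (lineMor_map_edge G p).symm).trans <|
    (Functor.hcongr_hom h _).trans (heq_of_eq (lineMor_map_edge G q))

theorem lineMor_comp (φ : G ⟶ H) {a b : G.V} (p : Quiver.Path a b) :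
    lineMor G p ≫ φ = lineMor H (pmap φ p) := by
  refine Paths.ext_functor (funext fun x => by cases x <;> rfl) ?_
  rintro _ _ ⟨⟨⟩, rfl, rfl⟩
  -- both `eqToHom`s are identities, i.e. `nil` in the path category
  change pmap φ (pmap (lineMor G p) (edgeHom lineNet ()).toPath) =
    Quiver.Path.nil.comp ((pmap (lineMor H (pmap φ p)) (edgeHom lineNet ()).toPath).comp .nil)
  rw [Quiver.Path.nil_comp, Quiver.Path.comp_nil, lineMor_map_edge, lineMor_map_edge]
  rfl

theorem mono_iff_inclusion {G H : CausalNet} (φ : G ⟶ H) :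
    Mono φ ↔ IsInclusion φ := by
  constructor
  · intro _
    refine ⟨fun a b hab => pointMor_injective G ?_, fun a b p q hpq => lineMor_injective G a b ?_⟩
    · exact (cancel_mono φ).mp (by rw [pointMor_comp, pointMor_comp, hab])
    · exact (cancel_mono φ).mp (by rw [lineMor_comp, lineMor_comp, hpq])
  · rintro ⟨hobj, hmap⟩
    have : Functor.Faithful (φ : Paths G.V ⥤ Paths H.V) := ⟨fun {a b} {p q} h => hmap a b p q h⟩
    exact ⟨fun ψ₁ ψ₂ h => Functor.eq_of_comp_eq_of_faithful (φ : Paths G.V ⥤ Paths H.V) hobj h⟩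

end CausalNets
end

section
/- For causal-nets G and H, H is a quotient-causal-net of G if and only if there exists a coarse-graining λ : G → H. -/
open CategoryTheory

namespace CausalNets

variable {G H K : CausalNet}

def InducedEdgeSet (G : CausalNet) (Es : Set G.E) : Prop :=
  ∀ e ∈ Es, ∀ e' : G.E, G.src e' = G.src e → G.tgt e' = G.tgt e → e' ∈ Es

def IsQuotientCausalNetOf (H G : CausalNet) : Prop :=
  ∃ (rv : Setoid G.V) (Es : Set G.E) (re : Setoid {e : G.E // e ∈ Es}),
    InducedEdgeSet G Es ∧
    (∀ e : G.E,
      (e ∈ Es → ¬ rv.r (G.src e) (G.tgt e)) ∧ (e ∉ Es → rv.r (G.src e) (G.tgt e))) ∧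
    (∀ e₁ e₂ : {e : G.E // e ∈ Es}, re.r e₁ e₂ →
      rv.r (G.src e₁.1) (G.src e₂.1) ∧ rv.r (G.tgt e₁.1) (G.tgt e₂.1)) ∧
    ∃ (fV : Quotient rv ≃ H.V) (fE : Quotient re ≃ H.E),
      ∀ e : {e : G.E // e ∈ Es},
        H.src (fE (Quotient.mk re e)) = fV (Quotient.mk rv (G.src e.1)) ∧
        H.tgt (fE (Quotient.mk re e)) = fV (Quotient.mk rv (G.tgt e.1))
/-! A coarse-graining sends every edge to a path of length at most one, and since the target is
acyclic that length is zero exactly when the endpoints are identified. Hence the vertex map gives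
`∼ν`, the edges with non-identified endpoints form `E`, and identifying edges with the same image
gives `∼ε`. Conversely, quotient data define a functor between path categories sending each edge
of `E` to its class and contracting every other edge. -/

theorem pathEdges_length {a b : G.V} (p : Quiver.Path a b) :
    (pathEdges p).length = p.length := by
  induction p with
  | nil => simp [pathEdges]
  | cons q f ih => rw [pathEdges, List.length_append, ih, Quiver.Path.length_cons]; rfl

theorem pathEdges_toPath {a b : G.V} (f : a ⟶ b) : pathEdges f.toPath = [f.1] := by
  simp [pathEdges, Quiver.Hom.toPath, homEdge]

theorem src_tgt_of_pathEdges_eq_singleton {a b : G.V} {p : Quiver.Path a b} {e : G.E}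
    (h : pathEdges p = [e]) : G.src e = a ∧ G.tgt e = b := by
  cases p with
  | nil => simp [pathEdges] at h
  | cons q f =>
    obtain ⟨hq, rfl⟩ : pathEdges q = [] ∧ homEdge f = e := by
      simpa [pathEdges, List.append_eq_singleton_iff] using h
    obtain rfl := Quiver.Path.eq_of_length_zero q (by rw [← pathEdges_length, hq]; rfl)
    exact f.2

theorem CausalNet.length_eq_zero_of_eq {a b : G.V} (p : Quiver.Path a b) (h : a = b) :
    p.length = 0 := by
  subst h
  exact G.acyclic a p

theorem CausalNet.src_ne_tgt (G : CausalNet) (e : G.E) : G.src e ≠ G.tgt e := fun h =>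
  one_ne_zero (CausalNet.length_eq_zero_of_eq (edgeHom G e).toPath h)

section Morphism

variable {φ : G ⟶ H} {e : G.E} {h h' : H.E}

theorem MapsToEdge.unique (h₁ : MapsToEdge φ e h) (h₂ : MapsToEdge φ e h') : h = h' :=
  List.singleton_inj.mp (h₁.symm.trans h₂)

theorem MapsToEdge.src_tgt (hm : MapsToEdge φ e h) :
    H.src h = vmap φ (G.src e) ∧ H.tgt h = vmap φ (G.tgt e) :=
  src_tgt_of_pathEdges_eq_singleton hm

theorem MapsToEdge.vmap_src_ne_vmap_tgt (hm : MapsToEdge φ e h) :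
    vmap φ (G.src e) ≠ vmap φ (G.tgt e) := by
  obtain ⟨hs, ht⟩ := hm.src_tgt
  rw [← hs, ← ht]
  exact H.src_ne_tgt h

theorem isSegmentEdge_of_vmap_ne (hs : ¬ IsSubdivisionEdge φ e)
    (hne : vmap φ (G.src e) ≠ vmap φ (G.tgt e)) : IsSegmentEdge φ e := by
  have h0 : (edgePath φ e).length ≠ 0 := fun h0 => hne (Quiver.Path.eq_of_length_zero _ h0)
  unfold IsSegmentEdge IsSubdivisionEdge at *
  omega

theorem IsSegmentEdge.exists_mapsToEdge (hs : IsSegmentEdge φ e) : ∃ h, MapsToEdge φ e h :=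
  List.length_eq_one_iff.mp ((pathEdges_length _).trans hs)

end Morphism

def ofEdgePaths (f : G.V → H.V) (g : ∀ e : G.E, Quiver.Path (f (G.src e)) (f (G.tgt e))) :
    G ⟶ H :=
  Paths.lift
    { obj := f
      map := fun x => (g x.1).cast (congrArg f x.2.1) (congrArg f x.2.2) }

section OfEdgePaths

variable (f : G.V → H.V) (g : ∀ e : G.E, Quiver.Path (f (G.src e)) (f (G.tgt e)))

theorem edgePath_ofEdgePaths (e : G.E) : edgePath (ofEdgePaths f g) e = g e :=
  Paths.lift_toPath _ _

theorem isCoarseGraining_ofEdgePaths (hf : Function.Surjective f)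
    (hg : ∀ h : H.E, ∃ e, pathEdges (g e) = [h]) (hle : ∀ e, (g e).length ≤ 1) :
    IsCoarseGraining (ofEdgePaths f g) := by
  refine ⟨⟨hf, fun h => (hg h).imp fun e he => ?_⟩, fun e hsub => ?_⟩
  · exact (congrArg pathEdges (edgePath_ofEdgePaths f g e)).trans he
  · rw [IsSubdivisionEdge, edgePath_ofEdgePaths] at hsub
    exact absurd (hsub.trans (hle e)) (by decide)

end OfEdgePaths

theorem exists_isCoarseGraining_of_isQuotientCausalNetOf (hq : IsQuotientCausalNetOf H G) :
    ∃ φ : G ⟶ H, IsCoarseGraining φ := by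
  classical
  obtain ⟨rv, Es, re, -, hEs, -, fV, fE, hfE⟩ := hq
  let f : G.V → H.V := fun v => fV (Quotient.mk rv v)
  have hf : ∀ e ∉ Es, f (G.src e) = f (G.tgt e) := fun e he =>
    congrArg fV (Quotient.sound ((hEs e).2 he))
  let g : ∀ e : G.E, Quiver.Path (f (G.src e)) (f (G.tgt e)) := fun e =>
    if he : e ∈ Es then
      Quiver.Hom.toPath (⟨fE (Quotient.mk re ⟨e, he⟩), hfE ⟨e, he⟩⟩ : f (G.src e) ⟶ f (G.tgt e))
    else Quiver.Path.nil.cast rfl (hf e he)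
  refine ⟨ofEdgePaths f g, isCoarseGraining_ofEdgePaths f g ?_ ?_ fun e => ?_⟩
  · exact fV.surjective.comp Quotient.mk_surjective
  · intro h
    obtain ⟨⟨e, he⟩, rfl⟩ := (fE.surjective.comp Quotient.mk_surjective) h
    exact ⟨e, by simp only [g, dif_pos he]; exact pathEdges_toPath _⟩
  · by_cases he : e ∈ Es
    · simp only [g, dif_pos he, Quiver.Path.length_toPath, le_refl]
    · simp only [g, dif_neg he]
      exact (CausalNet.length_eq_zero_of_eq _ (hf e he)).trans_le zero_le_one

theorem isQuotientCausalNetOf_of_isCoarseGraining {φ : G ⟶ H} (hφ : IsCoarseGraining φ) :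
    IsQuotientCausalNetOf H G := by
  obtain ⟨⟨hV, hE⟩, hsub⟩ := hφ
  let Es : Set G.E := {e | vmap φ (G.src e) ≠ vmap φ (G.tgt e)}
  choose img himg using fun e : Es => (isSegmentEdge_of_vmap_ne (hsub e.1) e.2).exists_mapsToEdge
  have himg_surj : Function.Surjective img := fun h =>
    have ⟨e, he⟩ := hE h
    ⟨⟨e, he.vmap_src_ne_vmap_tgt⟩, (himg _).unique he⟩
  refine ⟨Setoid.ker (vmap φ), Es, Setoid.ker img, ?_, fun e => ⟨id, not_not.mp⟩, ?_,
    Setoid.quotientKerEquivOfSurjective _ hV, Setoid.quotientKerEquivOfSurjective _ himg_surj,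
    fun e => (himg e).src_tgt⟩
  · intro e he e' hs ht
    simpa only [Es, Set.mem_ofPred_eq, hs, ht] using he
  · intro e₁ e₂ h₁₂
    obtain ⟨hs₁, ht₁⟩ := (himg e₁).src_tgt
    obtain ⟨hs₂, ht₂⟩ := (himg e₂).src_tgt
    exact ⟨hs₁.symm.trans (h₁₂ ▸ hs₂), ht₁.symm.trans (h₁₂ ▸ ht₂)⟩

theorem quotientCausalNet_iff_coarseGraining (G H : CausalNet) :
    IsQuotientCausalNetOf H G ↔ ∃ φ : G ⟶ H, IsCoarseGraining φ :=
  ⟨exists_isCoarseGraining_of_isQuotientCausalNetOf,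
    fun ⟨_, hφ⟩ => isQuotientCausalNetOf_of_isCoarseGraining hφ⟩

end CausalNets
end
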